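/- arXiv:1702.06626 — 8 statements merged into one kernel-verified Lean document; each statement's English description precedes it below -/
import Mathlib

section
/- Let M be a selfadjoint positive semidefinite linear operator on a finite-dimensional real inner product space Z, and define the extended dual seminorm ‖z‖*_M := sup{⟨z, z'⟩ : ‖z'‖_M ≤ 1}. Then ‖z‖*_M is finite if and only if z lies in the range of M. -/
/-!
If `z = M w`, Cauchy–Schwarz for the semi-inner product `⟪M ·, ·⟫` bounds `⟪z, z'⟫` by
`‖w‖_M ‖z'‖_M`, so `‖z‖*_M ≤ ‖w‖_M`. Conversely, since `M` is symmetric and `Z` is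
finite-dimensional, `range M = (ker M)ᗮ`; so if `z ∉ range M` there is `k ∈ ker M` with
`⟪z, k⟫ ≠ 0`, and every multiple of `k` has `M`-seminorm `0`, which makes `⟪z, t • k⟫`
unbounded on the unit ball of `‖·‖_M`.
-/

open RealInnerProductSpace

namespace LinearMap

variable {Z : Type*} [NormedAddCommGroup Z] [InnerProductSpace ℝ Z]

theorem IsPositive.inner_map_le_sqrt_mul_sqrt {M : Z →ₗ[ℝ] Z} (hM : M.IsPositive) (u v : Z) :
    ⟪M u, v⟫ ≤ √⟪M u, u⟫ * √⟪M v, v⟫ := by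
  have hcs : ⟪M u, v⟫ ^ 2 ≤ ⟪M u, u⟫ * ⟪M v, v⟫ := by
    have hswap : ⟪M v, u⟫ = ⟪M u, v⟫ := by rw [hM.isSymmetric, real_inner_comm]
    simpa only [coe_comp, Function.comp_apply, innerₗ_apply_apply, hswap, ← sq] using
      BilinForm.apply_mul_apply_le_of_forall_zero_le (innerₗ Z ∘ₗ M) hM.inner_nonneg_left u v
  rw [← Real.sqrt_mul (hM.inner_nonneg_left u)]
  exact (le_abs_self _).trans (Real.abs_le_sqrt hcs)

theorem IsSymmetric.range_eq_orthogonal_ker [FiniteDimensional ℝ Z] {M : Z →ₗ[ℝ] Z}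
    (hM : M.IsSymmetric) : range M = (ker M)ᗮ := by
  rw [← hM.orthogonal_range, Submodule.orthogonal_orthogonal]

end LinearMap

section DualSeminorm

open LinearMap

variable {Z : Type*} [NormedAddCommGroup Z] [InnerProductSpace ℝ Z]

noncomputable def dualSeminorm (M : Z →ₗ[ℝ] Z) (z : Z) : ENNReal :=
  ⨆ (z' : Z) (_ : √⟪M z', z'⟫ ≤ 1), ENNReal.ofReal ⟪z, z'⟫

theorem dualSeminorm_map_le {M : Z →ₗ[ℝ] Z} (hM : M.IsPositive) (w : Z) :
    dualSeminorm M (M w) ≤ ENNReal.ofReal √⟪M w, w⟫ := by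
  refine iSup₂_le fun z' hz' => ENNReal.ofReal_le_ofReal ?_
  calc ⟪M w, z'⟫ ≤ √⟪M w, w⟫ * √⟪M z', z'⟫ := hM.inner_map_le_sqrt_mul_sqrt w z'
    _ ≤ √⟪M w, w⟫ := mul_le_of_le_one_right (Real.sqrt_nonneg _) hz'

theorem dualSeminorm_eq_top_of_mem_ker {M : Z →ₗ[ℝ] Z} {z k : Z} (hk : k ∈ ker M)
    (hzk : ⟪z, k⟫ ≠ 0) : dualSeminorm M z = ⊤ := by
  refine eq_top_iff.mpr (ENNReal.iSup_natCast ▸ iSup_le fun n => ?_)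
  have hnull : √⟪M ((n / ⟪z, k⟫) • k), (n / ⟪z, k⟫) • k⟫ ≤ 1 := by
    simp [mem_ker.mp hk]
  refine le_trans ?_ (le_iSup₂ (f := fun z' _ => ENNReal.ofReal ⟪z, z'⟫) _ hnull)
  rw [real_inner_smul_right, div_mul_cancel₀ _ hzk, ENNReal.ofReal_natCast]

theorem dualSeminorm_ne_top_iff [FiniteDimensional ℝ Z] {M : Z →ₗ[ℝ] Z} (hM : M.IsPositive)
    (z : Z) : dualSeminorm M z ≠ ⊤ ↔ z ∈ range M := by
  constructor
  · intro hfin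
    rw [hM.isSymmetric.range_eq_orthogonal_ker, Submodule.mem_orthogonal']
    intro k hk
    by_contra hzk
    exact hfin (dualSeminorm_eq_top_of_mem_ker hk hzk)
  · rintro ⟨w, rfl⟩
    exact ne_top_of_le_ne_top ENNReal.ofReal_ne_top (dualSeminorm_map_le hM w)

end DualSeminorm

theorem stmt2 {Z : Type*} [NormedAddCommGroup Z] [InnerProductSpace ℝ Z]
    [FiniteDimensional ℝ Z] (M : Z →ₗ[ℝ] Z)
    (hsym : ∀ u v : Z, ⟪M u, v⟫ = ⟪u, M v⟫)
    (hpsd : ∀ u : Z, 0 ≤ ⟪M u, u⟫) (z : Z) :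
    (⨆ (z' : Z) (_ : Real.sqrt ⟪M z', z'⟫ ≤ 1), ENNReal.ofReal ⟪z, z'⟫) ≠ ⊤ ↔
      z ∈ LinearMap.range M :=
  dualSeminorm_ne_top_iff ((LinearMap.isPositive_iff M).mpr ⟨hsym, hpsd⟩) z
end

section
/- Let M be a selfadjoint positive semidefinite linear operator on a finite-dimensional real inner product space Z. Then for every z in Z, ‖M z‖*_M = ‖z‖_M, where ‖·‖_M is the seminorm induced by M and ‖·‖*_M is its dual seminorm. -/
/-!
The form `⟪M u, v⟫` is a positive semidefinite symmetric bilinear form, so it satisfies the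
Cauchy–Schwarz inequality `⟪M z, z'⟫ ≤ ‖z‖_M ‖z'‖_M`; this bounds the dual seminorm of `M z` by
`‖z‖_M`. The bound is attained at `z' = z / ‖z‖_M` (at `z' = 0` when `‖z‖_M = 0`).
-/

open RealInnerProductSpace

section PositiveSemidefiniteForm

variable {Z : Type*} [NormedAddCommGroup Z] [InnerProductSpace ℝ Z] (M : Z →ₗ[ℝ] Z)

theorem inner_map_mul_self_le (hsym : ∀ u v : Z, ⟪M u, v⟫ = ⟪u, M v⟫)
    (hpsd : ∀ u : Z, 0 ≤ ⟪M u, u⟫) (u v : Z) :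
    ⟪M u, v⟫ ^ 2 ≤ ⟪M u, u⟫ * ⟪M v, v⟫ := by
  have hquad : ∀ t : ℝ, 0 ≤ ⟪M v, v⟫ * (t * t) + 2 * ⟪M u, v⟫ * t + ⟪M u, u⟫ := by
    intro t
    have hvu : ⟪M v, u⟫ = ⟪M u, v⟫ := by rw [hsym, real_inner_comm]
    have h := hpsd (u + t • v)
    simp only [map_add, map_smul, inner_add_left, inner_add_right, real_inner_smul_left,
      real_inner_smul_right, hvu] at h
    linarith
  have hdisc := discrim_le_zero hquad
  rw [discrim] at hdisc
  linarith

theorem inner_map_le_sqrt_mul_sqrt (hsym : ∀ u v : Z, ⟪M u, v⟫ = ⟪u, M v⟫)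
    (hpsd : ∀ u : Z, 0 ≤ ⟪M u, u⟫) (u v : Z) :
    ⟪M u, v⟫ ≤ √⟪M u, u⟫ * √⟪M v, v⟫ := by
  rw [← Real.sqrt_mul (hpsd u)]
  exact (le_abs_self _).trans (Real.abs_le_sqrt (inner_map_mul_self_le M hsym hpsd u v))

theorem exists_sqrt_inner_map_le_one_and_eq (hpsd : ∀ u : Z, 0 ≤ ⟪M u, u⟫) (z : Z) :
    ∃ z' : Z, √⟪M z', z'⟫ ≤ 1 ∧ ⟪M z, z'⟫ = √⟪M z, z⟫ := by
  set s := √⟪M z, z⟫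
  have hs : ⟪M z, z⟫ = s ^ 2 := (Real.sq_sqrt (hpsd z)).symm
  refine ⟨s⁻¹ • z, ?_, ?_⟩
  · have hscaled : ⟪M (s⁻¹ • z), s⁻¹ • z⟫ = (s⁻¹ * s) ^ 2 := by
      rw [map_smul, real_inner_smul_left, real_inner_smul_right, hs]
      ring
    rw [hscaled, Real.sqrt_sq (by positivity)]
    exact inv_mul_le_one_of_le₀ le_rfl (Real.sqrt_nonneg _)
  · rw [real_inner_smul_right, hs]
    rcases eq_or_ne s 0 with h0 | h0
    · simp [h0]
    · field_simp

end PositiveSemidefiniteForm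

theorem stmt3_general {Z : Type*} [NormedAddCommGroup Z] [InnerProductSpace ℝ Z]
    (M : Z →ₗ[ℝ] Z)
    (hsym : ∀ u v : Z, ⟪M u, v⟫ = ⟪u, M v⟫)
    (hpsd : ∀ u : Z, 0 ≤ ⟪M u, u⟫) (z : Z) :
    (⨆ (z' : Z) (_ : Real.sqrt ⟪M z', z'⟫ ≤ 1), ENNReal.ofReal ⟪M z, z'⟫) =
      ENNReal.ofReal (Real.sqrt ⟪M z, z⟫) := by
  refine le_antisymm (iSup₂_le fun z' hz' => ENNReal.ofReal_le_ofReal ?_) ?_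
  · calc ⟪M z, z'⟫ ≤ √⟪M z, z⟫ * √⟪M z', z'⟫ := inner_map_le_sqrt_mul_sqrt M hsym hpsd z z'
      _ ≤ √⟪M z, z⟫ := mul_le_of_le_one_right (Real.sqrt_nonneg _) hz'
  · obtain ⟨z', hz'_le, hz'_eq⟩ := exists_sqrt_inner_map_le_one_and_eq M hpsd z
    exact le_iSup₂_of_le z' hz'_le (hz'_eq ▸ le_rfl)

theorem stmt3 {Z : Type*} [NormedAddCommGroup Z] [InnerProductSpace ℝ Z]
    [FiniteDimensional ℝ Z] (M : Z →ₗ[ℝ] Z)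
    (hsym : ∀ u v : Z, ⟪M u, v⟫ = ⟪u, M v⟫)
    (hpsd : ∀ u : Z, 0 ≤ ⟪M u, u⟫) (z : Z) :
    (⨆ (z' : Z) (_ : Real.sqrt ⟪M z', z'⟫ ≤ 1), ENNReal.ofReal ⟪M z, z'⟫) =
      ENNReal.ofReal (Real.sqrt ⟪M z, z⟫) :=
  stmt3_general M hsym hpsd z
end

section
/- Let T be a monotone set-valued operator on a finite-dimensional real inner product space Z, and for i = 1,…,k let r_i ∈ T(z̃_i). With z̃ᵃ = (1/k)∑ z̃_i, rᵃ = (1/k)∑ r_i and εᵃ = (1/k)∑⟨r_i, z̃_i − z̃ᵃ⟩, one has rᵃ ∈ T^{εᵃ}(z̃ᵃ), i.e., ⟨rᵃ − v', z̃ᵃ − z'⟩ ≥ −εᵃ for every z' ∈ Z and v' ∈ T(z'). -/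
open RealInnerProductSpace

theorem stmt7 {Z : Type*} [NormedAddCommGroup Z] [InnerProductSpace ℝ Z]
    [FiniteDimensional ℝ Z] (T : Z → Set Z)
    (hmono : ∀ z z' v v', v ∈ T z → v' ∈ T z' → 0 ≤ ⟪v - v', z - z'⟫)
    (k : ℕ) (hk : 0 < k) (ztil r : Fin k → Z)
    (hri : ∀ i, r i ∈ T (ztil i)) :
    ∀ z' v', v' ∈ T z' →
      -((k : ℝ)⁻¹ * ∑ i, ⟪r i, ztil i - (k : ℝ)⁻¹ • ∑ j, ztil j⟫) ≤
        ⟪(k : ℝ)⁻¹ • ∑ i, r i - v', ((k : ℝ)⁻¹ • ∑ j, ztil j) - z'⟫ := by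
  intro z' v' hv'
  have hk' : (k : ℝ) ≠ 0 := Nat.cast_ne_zero.mpr hk.ne'
  have key : 0 ≤ ∑ i, ⟪r i - v', ztil i - z'⟫ :=
    Finset.sum_nonneg fun i _ => hmono _ _ _ _ (hri i) hv'
  have key' : 0 ≤ (k : ℝ)⁻¹ * ∑ i, ⟪r i - v', ztil i - z'⟫ :=
    mul_nonneg (inv_nonneg.mpr (Nat.cast_nonneg k)) key
  have expand : (k : ℝ)⁻¹ * ∑ i, ⟪r i - v', ztil i - z'⟫
      = ((k : ℝ)⁻¹ * ∑ i, ⟪r i, ztil i - (k : ℝ)⁻¹ • ∑ j, ztil j⟫)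
        + ⟪(k : ℝ)⁻¹ • ∑ i, r i - v', ((k : ℝ)⁻¹ • ∑ j, ztil j) - z'⟫ := by
    simp only [inner_sub_left, inner_sub_right, real_inner_smul_left,
      real_inner_smul_right, Finset.sum_sub_distrib, Finset.sum_const,
      Finset.card_univ, Fintype.card_fin, nsmul_eq_mul]
    simp only [← Finset.mul_sum, ← sum_inner, ← inner_sum]
    field_simp
    ring
  linarith
end

section
/- Let f : Z → ℝ ∪ {+∞} be a proper convex function, and for i = 1,…,k let r_i ∈ ∂f(z̃_i). Define z̃ᵃ = (1/k)∑ z̃_i, rᵃ = (1/k)∑ r_i and εᵃ = (1/k)∑⟨r_i, z̃_i − z̃ᵃ⟩. Then rᵃ ∈ ∂_{εᵃ} f(z̃ᵃ), i.e., f(z') ≥ f(z̃ᵃ) + ⟨rᵃ, z' − z̃ᵃ⟩ − εᵃ for all z' ∈ Z. -/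
/-!
Average the subgradient inequalities `f z' ≥ f zᵢ + ⟪rᵢ, z' - zᵢ⟫` and use Jensen,
`f z̄ ≤ ∑ wᵢ f zᵢ`. What remains is the identity
`∑ wᵢ ⟪rᵢ, z' - zᵢ⟫ = ⟪∑ wᵢ rᵢ, z' - z̄⟫ - ∑ wᵢ ⟪rᵢ, zᵢ - z̄⟫`, valid for every point `z̄`.
When `f z' < ⊤` the subgradient inequalities force every `f zᵢ` to be finite, so the argument
runs for the real-valued restriction of `f` to its effective domain.
-/

open RealInnerProductSpace Finset

section EpsSubgradient

variable {Z ι : Type*} [NormedAddCommGroup Z] [InnerProductSpace ℝ Z]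

theorem inner_sum_smul_sub_sub_sum_mul_inner (t : Finset ι) (w : ι → ℝ) (r z : ι → Z) (c z' : Z) :
    ⟪∑ i ∈ t, w i • r i, z' - c⟫ - ∑ i ∈ t, w i * ⟪r i, z i - c⟫ =
      ∑ i ∈ t, w i * ⟪r i, z' - z i⟫ := by
  simp only [sum_inner, real_inner_smul_left, ← sum_sub_distrib, inner_sub_right]
  exact sum_congr rfl fun i _ => by ring

theorem ConvexOn.add_inner_sub_sum_le_of_subgradient {s : Set Z} {g : Z → ℝ}
    (hg : ConvexOn ℝ s g) {t : Finset ι} {w : ι → ℝ} (hw₀ : ∀ i ∈ t, 0 ≤ w i)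
    (hw₁ : ∑ i ∈ t, w i = 1) {z r : ι → Z} (hz : ∀ i ∈ t, z i ∈ s) {z' : Z}
    (hr : ∀ i ∈ t, g (z i) + ⟪r i, z' - z i⟫ ≤ g z') :
    g (∑ i ∈ t, w i • z i) + (⟪∑ i ∈ t, w i • r i, z' - ∑ i ∈ t, w i • z i⟫ -
      ∑ i ∈ t, w i * ⟪r i, z i - ∑ i ∈ t, w i • z i⟫) ≤ g z' := by
  rw [inner_sum_smul_sub_sub_sum_mul_inner]
  have jensen : g (∑ i ∈ t, w i • z i) ≤ ∑ i ∈ t, w i * g (z i) := hg.map_sum_le hw₀ hw₁ hz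
  calc g (∑ i ∈ t, w i • z i) + ∑ i ∈ t, w i * ⟪r i, z' - z i⟫
      ≤ ∑ i ∈ t, w i * (g (z i) + ⟪r i, z' - z i⟫) := by
        simp only [mul_add, sum_add_distrib]
        linarith
    _ ≤ ∑ i ∈ t, w i * g z' :=
        sum_le_sum fun i hi => mul_le_mul_of_nonneg_left (hr i hi) (hw₀ i hi)
    _ = g z' := by rw [← sum_mul, hw₁, one_mul]

theorem convexOn_toReal_of_ne_bot {E : Type*} [AddCommGroup E] [Module ℝ E] {f : E → EReal}
    (hbot : ∀ x, f x ≠ ⊥)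
    (hconvex : ∀ x y : E, ∀ a b : ℝ, 0 ≤ a → 0 ≤ b → a + b = 1 →
      f (a • x + b • y) ≤ (a : EReal) * f x + (b : EReal) * f y) :
    ConvexOn ℝ {x | f x ≠ ⊤} fun x => (f x).toReal := by
  have bound : ∀ x ∈ {x | f x ≠ ⊤}, ∀ y ∈ {x | f x ≠ ⊤}, ∀ a b : ℝ, 0 ≤ a → 0 ≤ b → a + b = 1 →
      f (a • x + b • y) ≤ ((a * (f x).toReal + b * (f y).toReal : ℝ) : EReal) := by
    intro x hx y hy a b ha hb hab
    rw [EReal.coe_add, EReal.coe_mul, EReal.coe_mul, EReal.coe_toReal hx (hbot x),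
      EReal.coe_toReal hy (hbot y)]
    exact hconvex x y a b ha hb hab
  refine ⟨fun x hx y hy a b ha hb hab => ?_, fun x hx y hy a b ha hb hab => ?_⟩
  · exact ne_top_of_le_ne_top (EReal.coe_ne_top _) (bound x hx y hy a b ha hb hab)
  · rw [← EReal.toReal_coe (a • (f x).toReal + b • (f y).toReal)]
    exact EReal.toReal_le_toReal (bound x hx y hy a b ha hb hab) (hbot _) (EReal.coe_ne_top _)

theorem add_inner_sub_sum_le_of_subgradient_of_ne_bot {f : Z → EReal} (hbot : ∀ x, f x ≠ ⊥)
    (hconvex : ∀ x y : Z, ∀ a b : ℝ, 0 ≤ a → 0 ≤ b → a + b = 1 →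
      f (a • x + b • y) ≤ (a : EReal) * f x + (b : EReal) * f y)
    {t : Finset ι} {w : ι → ℝ} (hw₀ : ∀ i ∈ t, 0 ≤ w i) (hw₁ : ∑ i ∈ t, w i = 1)
    {z r : ι → Z} {z' : Z} (hr : ∀ i ∈ t, f (z i) + ((⟪r i, z' - z i⟫ : ℝ) : EReal) ≤ f z') :
    f (∑ i ∈ t, w i • z i) + ((⟪∑ i ∈ t, w i • r i, z' - ∑ i ∈ t, w i • z i⟫ -
      ∑ i ∈ t, w i * ⟪r i, z i - ∑ i ∈ t, w i • z i⟫ : ℝ) : EReal) ≤ f z' := by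
  by_cases htop : f z' = ⊤
  · exact htop ▸ le_top
  have hg := convexOn_toReal_of_ne_bot hbot hconvex
  have hcoe : ∀ x, f x ≠ ⊤ → f x = ((f x).toReal : EReal) :=
    fun x hx => (EReal.coe_toReal hx (hbot x)).symm
  have hz : ∀ i ∈ t, f (z i) ≠ ⊤ := fun i hi hzi =>
    htop (top_le_iff.1 (by simpa [hzi] using hr i hi))
  rw [hcoe _ (hg.1.sum_mem hw₀ hw₁ hz), hcoe z' htop]
  exact_mod_cast hg.add_inner_sub_sum_le_of_subgradient hw₀ hw₁ hz fun i hi => by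
    have := hr i hi
    rw [hcoe _ (hz i hi), hcoe z' htop] at this
    exact_mod_cast this

end EpsSubgradient

theorem stmt8_general {Z : Type*} [NormedAddCommGroup Z] [InnerProductSpace ℝ Z]
    (f : Z → EReal)
    (hproper_bot : ∀ x, f x ≠ ⊥)
    (hconvex : ∀ x y : Z, ∀ a b : ℝ, 0 ≤ a → 0 ≤ b → a + b = 1 →
      f (a • x + b • y) ≤ (a : EReal) * f x + (b : EReal) * f y)
    (k : ℕ) (hk : 0 < k) (ztil r : Fin k → Z)
    (hri : ∀ i, ∀ z' : Z, f (ztil i) + ((⟪r i, z' - ztil i⟫ : ℝ) : EReal) ≤ f z') :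
    ∀ z' : Z,
      f ((k : ℝ)⁻¹ • ∑ j, ztil j) +
        ((⟪(k : ℝ)⁻¹ • ∑ i, r i, z' - (k : ℝ)⁻¹ • ∑ j, ztil j⟫ -
          (k : ℝ)⁻¹ * ∑ i, ⟪r i, ztil i - (k : ℝ)⁻¹ • ∑ j, ztil j⟫ : ℝ) : EReal) ≤
        f z' := by
  intro z'
  have hw₁ : ∑ _i : Fin k, (k : ℝ)⁻¹ = 1 := by
    rw [sum_const, card_univ, Fintype.card_fin, nsmul_eq_mul, mul_inv_cancel₀ (by positivity)]
  simpa only [← smul_sum, ← mul_sum] using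
    add_inner_sub_sum_le_of_subgradient_of_ne_bot hproper_bot hconvex
      (fun _ _ => by positivity) hw₁ fun i _ => hri i z'

theorem stmt8 {Z : Type*} [NormedAddCommGroup Z] [InnerProductSpace ℝ Z]
    [FiniteDimensional ℝ Z] (f : Z → EReal)
    (hproper_top : ∃ x, f x ≠ ⊤) (hproper_bot : ∀ x, f x ≠ ⊥)
    (hconvex : ∀ x y : Z, ∀ a b : ℝ, 0 ≤ a → 0 ≤ b → a + b = 1 →
      f (a • x + b • y) ≤ (a : EReal) * f x + (b : EReal) * f y)
    (k : ℕ) (hk : 0 < k) (ztil r : Fin k → Z)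
    (hri : ∀ i, ∀ z' : Z, f (ztil i) + ((⟪r i, z' - ztil i⟫ : ℝ) : EReal) ≤ f z') :
    ∀ z' : Z,
      f ((k : ℝ)⁻¹ • ∑ j, ztil j) +
        ((⟪(k : ℝ)⁻¹ • ∑ i, r i, z' - (k : ℝ)⁻¹ • ∑ j, ztil j⟫ -
          (k : ℝ)⁻¹ * ∑ i, ⟪r i, ztil i - (k : ℝ)⁻¹ • ∑ j, ztil j⟫ : ℝ) : EReal) ≤
        f z' :=
  stmt8_general f hproper_bot hconvex k hk ztil r hri
end

section
/- Let T be a monotone operator on Z, z* a zero of T (0 ∈ T(z*)), and suppose M is selfadjoint positive semidefinite on Z, σ ∈ [0,1), η, η₊ ≥ 0, and points z, z₊, z̃ satisfy M(z − z₊) ∈ T(z̃) and ‖z₊ − z̃‖_M² + η₊ ≤ σ‖z − z̃‖_M² + η. Then ‖z* − z₊‖_M² ≤ ‖z* − z‖_M² + η − η₊ − (1 − σ)‖z − z̃‖_M². -/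
open RealInnerProductSpace

theorem stmt11 {Z : Type*} [NormedAddCommGroup Z] [InnerProductSpace ℝ Z]
    [FiniteDimensional ℝ Z] (T : Z → Set Z)
    (hmono : ∀ z z' v v', v ∈ T z → v' ∈ T z' → 0 ≤ ⟪v - v', z - z'⟫)
    (zs : Z) (hzs : (0 : Z) ∈ T zs)
    (M : Z →ₗ[ℝ] Z)
    (hsym : ∀ u v : Z, ⟪M u, v⟫ = ⟪u, M v⟫) (hpsd : ∀ u : Z, 0 ≤ ⟪M u, u⟫)
    (σ : ℝ) (hσ0 : 0 ≤ σ) (hσ1 : σ < 1)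
    (η ηp : ℝ) (hη : 0 ≤ η) (hηp : 0 ≤ ηp)
    (z zp ztil : Z)
    (hincl : M (z - zp) ∈ T ztil)
    (herr : ⟪M (zp - ztil), zp - ztil⟫ + ηp ≤ σ * ⟪M (z - ztil), z - ztil⟫ + η) :
    ⟪M (zs - zp), zs - zp⟫ ≤
      ⟪M (zs - z), zs - z⟫ + η - ηp - (1 - σ) * ⟪M (z - ztil), z - ztil⟫ := by
  have hm := hmono ztil zs (M (z - zp)) 0 hincl hzs
  rw [sub_zero] at hm
  have e1 : zs - zp = (zs - z) + (z - ztil) - (zp - ztil) := by abel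
  have e2 : z - zp = (z - ztil) - (zp - ztil) := by abel
  have e3 : ztil - zs = -((zs - z) + (z - ztil)) := by abel
  rw [e2, e3] at hm
  rw [e1]
  set b := zs - z
  set c := z - ztil
  set d := zp - ztil
  simp only [map_add, map_sub, map_neg, inner_add_left, inner_add_right,
    inner_sub_left, inner_sub_right, inner_neg_left, inner_neg_right] at hm herr ⊢
  have s1 := hsym b c
  have s2 := hsym b d
  have s3 := hsym c d
  have s1' := hsym c b
  have s2' := hsym d b
  have s3' := hsym d c
  simp only [real_inner_comm (M b) c, real_inner_comm (M b) d,
    real_inner_comm (M c) d, real_inner_comm (M c) b, real_inner_comm (M d) b,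
    real_inner_comm (M d) c] at *
  linarith
end

section
/- In the VM-HPE framework, suppose for every k ≥ 1: r_k := M_k(z_{k−1} − z_k) ∈ T(z̃_k) and ‖z_k − z̃_k‖_{M_k}² + η_k ≤ σ‖z_{k−1} − z̃_k‖_{M_k}² + η_{k−1}, where T is maximal monotone with a zero z*, σ ∈ [0,1), η_k ≥ 0, and the operators satisfy M_k ⪯ (1+c_{k−1})M_{k−1} with ∏_{i=0}^{k}(1+c_i) ≤ C_P. Then for every k ≥ 1: ‖z* − z_k‖_{M_k}² + η_k + (1 − σ)∑_{i=1}^{k}‖z_{i−1} − z̃_i‖_{M_i}² ≤ C_P(‖z* − z₀‖_{M₀}² + η₀). -/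
/-!
Fejér-type descent for the variable-metric hybrid proximal extragradient method. Monotonicity
of `T` at the pair `(z̃ₖ, z*)`, expanded through the three-point identity of the seminorm
`‖·‖_{Mₖ}`, gives
`‖z* - zₖ‖² + ‖zₖ₋₁ - z̃ₖ‖² ≤ ‖z* - zₖ₋₁‖² + ‖zₖ - z̃ₖ‖²` in the metric `Mₖ`, and the relative
error condition turns this into
`Vₖ + (1 - σ) ‖zₖ₋₁ - z̃ₖ‖²_{Mₖ} ≤ (1 + cₖ₋₁) Vₖ₋₁` for `Vₖ = ‖z* - zₖ‖²_{Mₖ} + ηₖ`,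
the factor `1 + cₖ₋₁` paying for the change of metric. Unrolling this recursion multiplies
`V₀` by at most `∏ (1 + cᵢ) ≤ C_P`.
-/

open RealInnerProductSpace Finset

namespace LinearMap.IsSymmetric

variable {Z : Type*} [NormedAddCommGroup Z] [InnerProductSpace ℝ Z] {N : Z →ₗ[ℝ] Z}

theorem inner_map_sub_sub (hN : N.IsSymmetric) (a b : Z) :
    ⟪N (a - b), a - b⟫ = ⟪N a, a⟫ - 2 * ⟪N b, a⟫ + ⟪N b, b⟫ := by
  have hba : ⟪N a, b⟫ = ⟪N b, a⟫ := by rw [hN, real_inner_comm]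
  simp only [map_sub, inner_sub_left, inner_sub_right, hba]
  ring

theorem inner_map_sub_add_le (hN : N.IsSymmetric) {p x x' y : Z}
    (h : 0 ≤ ⟪N (x - x'), y - p⟫) :
    ⟪N (p - x'), p - x'⟫ + ⟪N (x - y), x - y⟫ ≤
      ⟪N (p - x), p - x⟫ + ⟪N (x' - y), x' - y⟫ := by
  have hp : p - x = (p - x') - (x - x') := by abel
  have hx : x - y = (x - x') - (y - x') := by abel
  have hx' : x' - y = -(y - x') := by abel
  have hangle : y - p = (y - x') - (p - x') := by abel
  rw [hangle, inner_sub_right] at h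
  have hsymm : ⟪N (y - x'), x - x'⟫ = ⟪N (x - x'), y - x'⟫ := by rw [hN, real_inner_comm]
  rw [hp, hx, hx', map_neg, inner_neg_neg, hN.inner_map_sub_sub (p - x') (x - x'),
    hN.inner_map_sub_sub (x - x') (y - x'), hsymm]
  linarith

end LinearMap.IsSymmetric

theorem add_sum_Icc_le_prod_mul {A s c : ℕ → ℝ} (hs : ∀ k, 0 ≤ s k) (hc : ∀ k, 0 ≤ c k)
    (h : ∀ k, A (k + 1) + s (k + 1) ≤ (1 + c k) * A k) (k : ℕ) :
    A k + ∑ i ∈ Icc 1 k, s i ≤ (∏ i ∈ range k, (1 + c i)) * A 0 := by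
  induction k with
  | zero => simp
  | succ n ih =>
    have hsum_le : ∑ i ∈ Icc 1 n, s i ≤ (1 + c n) * ∑ i ∈ Icc 1 n, s i :=
      le_mul_of_one_le_left (sum_nonneg fun i _ => hs i) (by linarith [hc n])
    rw [sum_Icc_succ_top (Nat.le_add_left 1 n), prod_range_succ]
    calc A (n + 1) + (∑ i ∈ Icc 1 n, s i + s (n + 1))
        ≤ (1 + c n) * (A n + ∑ i ∈ Icc 1 n, s i) := by linarith [h n]
      _ ≤ (1 + c n) * ((∏ i ∈ range n, (1 + c i)) * A 0) :=
        mul_le_mul_of_nonneg_left ih (by linarith [hc n])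
      _ = (∏ i ∈ range n, (1 + c i)) * (1 + c n) * A 0 := by ring

theorem stmt12_general {Z : Type*} [NormedAddCommGroup Z] [InnerProductSpace ℝ Z]
    (T : Z → Set Z)
    (hmono : ∀ z z' v v', v ∈ T z → v' ∈ T z' → 0 ≤ ⟪v - v', z - z'⟫)
    (zs : Z) (hzs : (0 : Z) ∈ T zs)
    (M : ℕ → (Z →ₗ[ℝ] Z))
    (hsym : ∀ k, ∀ u v : Z, ⟪M k u, v⟫ = ⟪u, M k v⟫)
    (hpsd : ∀ k, ∀ u : Z, 0 ≤ ⟪M k u, u⟫)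
    (σ : ℝ) (hσ1 : σ < 1)
    (η : ℕ → ℝ) (hη : ∀ k, 0 ≤ η k)
    (c : ℕ → ℝ) (hc : ∀ k, 0 ≤ c k) (C_P : ℝ)
    (hprod : ∀ k, ∏ i ∈ range (k + 1), (1 + c i) ≤ C_P)
    (hcomp : ∀ k ≥ 1, ∀ u : Z, ⟪M k u, u⟫ ≤ (1 + c (k - 1)) * ⟪M (k - 1) u, u⟫)
    (z ztil : ℕ → Z)
    (hincl : ∀ k ≥ 1, M k (z (k - 1) - z k) ∈ T (ztil k))
    (herr : ∀ k ≥ 1,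
      ⟪M k (z k - ztil k), z k - ztil k⟫ + η k ≤
        σ * ⟪M k (z (k - 1) - ztil k), z (k - 1) - ztil k⟫ + η (k - 1)) :
    ∀ k ≥ 1,
      ⟪M k (zs - z k), zs - z k⟫ + η k +
          (1 - σ) * ∑ i ∈ Icc 1 k, ⟪M i (z (i - 1) - ztil i), z (i - 1) - ztil i⟫ ≤
        C_P * (⟪M 0 (zs - z 0), zs - z 0⟫ + η 0) := by
  intro k _
  set V : ℕ → ℝ := fun k => ⟪M k (zs - z k), zs - z k⟫ + η k
  set d : ℕ → ℝ := fun i => ⟪M i (z (i - 1) - ztil i), z (i - 1) - ztil i⟫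
  have hstep : ∀ n, V (n + 1) + (1 - σ) * d (n + 1) ≤ (1 + c n) * V n := by
    intro n
    have hangle := hmono _ _ _ _ (hincl (n + 1) (Nat.le_add_left 1 n)) hzs
    have herr := herr (n + 1) (Nat.le_add_left 1 n)
    have hcomp := hcomp (n + 1) (Nat.le_add_left 1 n) (zs - z n)
    simp only [Nat.add_sub_cancel, sub_zero] at hangle herr hcomp
    have hdescent := LinearMap.IsSymmetric.inner_map_sub_add_le (hsym (n + 1)) hangle
    simp only [V, d, Nat.add_sub_cancel]
    linarith [mul_nonneg (hc n) (hη n)]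
  have hV0 : 0 ≤ V 0 := add_nonneg (hpsd 0 _) (hη 0)
  have hprod_le : ∏ i ∈ range k, (1 + c i) ≤ C_P := by
    refine le_trans ?_ (hprod k)
    rw [prod_range_succ]
    exact le_mul_of_one_le_right (prod_nonneg fun i _ => by linarith [hc i]) (by linarith [hc k])
  rw [mul_sum]
  calc V k + ∑ i ∈ Icc 1 k, (1 - σ) * d i ≤ (∏ i ∈ range k, (1 + c i)) * V 0 :=
        add_sum_Icc_le_prod_mul (fun i => mul_nonneg (by linarith) (hpsd i _)) hc hstep k
    _ ≤ C_P * V 0 := mul_le_mul_of_nonneg_right hprod_le hV0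

theorem stmt12 {Z : Type*} [NormedAddCommGroup Z] [InnerProductSpace ℝ Z]
    [FiniteDimensional ℝ Z] (T : Z → Set Z)
    (hmono : ∀ z z' v v', v ∈ T z → v' ∈ T z' → 0 ≤ ⟪v - v', z - z'⟫)
    (zs : Z) (hzs : (0 : Z) ∈ T zs)
    (M : ℕ → (Z →ₗ[ℝ] Z))
    (hsym : ∀ k, ∀ u v : Z, ⟪M k u, v⟫ = ⟪u, M k v⟫)
    (hpsd : ∀ k, ∀ u : Z, 0 ≤ ⟪M k u, u⟫)
    (σ : ℝ) (hσ0 : 0 ≤ σ) (hσ1 : σ < 1)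
    (η : ℕ → ℝ) (hη : ∀ k, 0 ≤ η k)
    (c : ℕ → ℝ) (hc : ∀ k, 0 ≤ c k) (C_P : ℝ)
    (hprod : ∀ k, ∏ i ∈ range (k + 1), (1 + c i) ≤ C_P)
    (hcomp : ∀ k ≥ 1, ∀ u : Z, ⟪M k u, u⟫ ≤ (1 + c (k - 1)) * ⟪M (k - 1) u, u⟫)
    (z ztil : ℕ → Z)
    (hincl : ∀ k ≥ 1, M k (z (k - 1) - z k) ∈ T (ztil k))
    (herr : ∀ k ≥ 1,
      ⟪M k (z k - ztil k), z k - ztil k⟫ + η k ≤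
        σ * ⟪M k (z (k - 1) - ztil k), z (k - 1) - ztil k⟫ + η (k - 1)) :
    ∀ k ≥ 1,
      ⟪M k (zs - z k), zs - z k⟫ + η k +
          (1 - σ) * ∑ i ∈ Icc 1 k, ⟪M i (z (i - 1) - ztil i), z (i - 1) - ztil i⟫ ≤
        C_P * (⟪M 0 (zs - z 0), zs - z 0⟫ + η 0) :=
  stmt12_general T hmono zs hzs M hsym hpsd σ hσ1 η hη c hc C_P hprod hcomp z ztil hincl herr
end

section
/- Under the VM-HPE conditions with σ ∈ [0,1) and metric compatibility M_{i+1} ⪯ (1+c_i)M_i, the ergodic epsilon εᵃ_k := (1/k)∑_{i=1}^{k}⟨r_i, z̃_i − z̃ᵃ_k⟩ (where z̃ᵃ_k = (1/k)∑ z̃_i and r_i = M_i(z_{i−1} − z_i)) satisfies εᵃ_k ≤ (1/(2k))[η₀ + ‖z̃ᵃ_k − z₀‖_{M₀}² + ∑_{i=1}^{k} c_{i−1}‖z̃ᵃ_k − z_{i−1}‖_{M_{i−1}}²]. -/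
/-!
Write `x` for the ergodic mean of the `z̃ᵢ`. Expanding the seminorms, each HPE step satisfies the
three-point identity
`2⟪Mᵢ(zᵢ₋₁ - zᵢ), z̃ᵢ - x⟫ =`
  `‖x - zᵢ₋₁‖²_{Mᵢ} - ‖x - zᵢ‖²_{Mᵢ} - ‖zᵢ₋₁ - z̃ᵢ‖²_{Mᵢ} + ‖zᵢ - z̃ᵢ‖²_{Mᵢ}`.
The relative error criterion bounds the last two terms by `ηᵢ₋₁ - ηᵢ`, and metric compatibility
bounds `‖x - zᵢ₋₁‖²_{Mᵢ}` by `(1 + cᵢ₋₁)‖x - zᵢ₋₁‖²_{Mᵢ₋₁}`. The Lyapunov quantity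
`‖x - zᵢ‖²_{Mᵢ} + ηᵢ` then telescopes, and its final value is nonnegative.
-/

open RealInnerProductSpace Finset

namespace LinearMap.IsSymmetric

variable {Z : Type*} [NormedAddCommGroup Z] [InnerProductSpace ℝ Z] {N : Z →ₗ[ℝ] Z}

theorem two_mul_inner_sub_sub_eq (hN : N.IsSymmetric) (a b c x : Z) :
    2 * ⟪N (a - b), c - x⟫ =
      ⟪N (x - a), x - a⟫ - ⟪N (x - b), x - b⟫ - ⟪N (a - c), a - c⟫ + ⟪N (b - c), b - c⟫ := by
  have hsymm : ∀ u v, ⟪N u, v⟫ = ⟪N v, u⟫ := fun u v => by rw [hN, real_inner_comm]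
  simp only [map_sub, inner_sub_left, inner_sub_right]
  linarith [hsymm a b, hsymm a c, hsymm a x, hsymm b c, hsymm b x, hsymm c x]

theorem two_mul_inner_le_of_hpe_step (hN : N.IsSymmetric) {N₀ : Z →ₗ[ℝ] Z} {a b c x : Z}
    {σ η η' γ : ℝ} (hσ : σ ≤ 1) (hpsd : 0 ≤ ⟪N (a - c), a - c⟫)
    (herr : ⟪N (b - c), b - c⟫ + η' ≤ σ * ⟪N (a - c), a - c⟫ + η)
    (hcomp : ⟪N (x - a), x - a⟫ ≤ (1 + γ) * ⟪N₀ (x - a), x - a⟫) :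
    2 * ⟪N (a - b), c - x⟫ ≤
      (⟪N₀ (x - a), x - a⟫ + η) - (⟪N (x - b), x - b⟫ + η') + γ * ⟪N₀ (x - a), x - a⟫ := by
  have hσQ : σ * ⟪N (a - c), a - c⟫ ≤ ⟪N (a - c), a - c⟫ := mul_le_of_le_one_left hpsd hσ
  rw [hN.two_mul_inner_sub_sub_eq]
  linarith

end LinearMap.IsSymmetric

theorem Finset.sum_Icc_sub_telescope (f : ℕ → ℝ) (n : ℕ) :
    ∑ i ∈ Icc 1 n, (f (i - 1) - f i) = f 0 - f n := by
  induction n with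
  | zero => simp
  | succ n ih =>
    rw [sum_Icc_succ_top (by omega), ih, Nat.add_sub_cancel]
    ring

theorem inv_mul_sum_le_of_two_mul_le_sub_add {k : ℕ} (hk : 1 ≤ k) {a b f : ℕ → ℝ}
    (hstep : ∀ i ∈ Icc 1 k, 2 * a i ≤ f (i - 1) - f i + b i) (hfk : 0 ≤ f k) :
    (k : ℝ)⁻¹ * ∑ i ∈ Icc 1 k, a i ≤ 1 / (2 * k) * (f 0 + ∑ i ∈ Icc 1 k, b i) := by
  have hsum : 2 * ∑ i ∈ Icc 1 k, a i ≤ f 0 - f k + ∑ i ∈ Icc 1 k, b i := by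
    rw [mul_sum, ← sum_Icc_sub_telescope, ← sum_add_distrib]
    exact sum_le_sum hstep
  have hk0 : (0 : ℝ) < k := by exact_mod_cast hk
  calc (k : ℝ)⁻¹ * ∑ i ∈ Icc 1 k, a i = 1 / (2 * k) * (2 * ∑ i ∈ Icc 1 k, a i) := by
        field_simp
    _ ≤ 1 / (2 * k) * (f 0 + ∑ i ∈ Icc 1 k, b i) := by gcongr; linarith

theorem stmt16_general {Z : Type*} [NormedAddCommGroup Z] [InnerProductSpace ℝ Z]
    (M : ℕ → (Z →ₗ[ℝ] Z))
    (hsym : ∀ k, ∀ u v : Z, ⟪M k u, v⟫ = ⟪u, M k v⟫)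
    (hpsd : ∀ k, ∀ u : Z, 0 ≤ ⟪M k u, u⟫)
    (σ : ℝ) (hσ1 : σ < 1)
    (η : ℕ → ℝ) (hη : ∀ k, 0 ≤ η k)
    (c : ℕ → ℝ)
    (hcomp : ∀ i ≥ 1, ∀ u : Z, ⟪M i u, u⟫ ≤ (1 + c (i - 1)) * ⟪M (i - 1) u, u⟫)
    (z ztil : ℕ → Z)
    (herr : ∀ k : ℕ, 1 ≤ k →
      ⟪M k (z k - ztil k), z k - ztil k⟫ + η k ≤
        σ * ⟪M k (z (k - 1) - ztil k), z (k - 1) - ztil k⟫ + η (k - 1)) :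
    ∀ k : ℕ, 1 ≤ k →
      (k : ℝ)⁻¹ * ∑ i ∈ Icc 1 k,
          ⟪M i (z (i - 1) - z i), ztil i - (k : ℝ)⁻¹ • ∑ j ∈ Icc 1 k, ztil j⟫ ≤
        (1 / (2 * k)) * (η 0 +
          ⟪M 0 (((k : ℝ)⁻¹ • ∑ j ∈ Icc 1 k, ztil j) - z 0),
            ((k : ℝ)⁻¹ • ∑ j ∈ Icc 1 k, ztil j) - z 0⟫ +
          ∑ i ∈ Icc 1 k, c (i - 1) *
            ⟪M (i - 1) (((k : ℝ)⁻¹ • ∑ j ∈ Icc 1 k, ztil j) - z (i - 1)),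
              ((k : ℝ)⁻¹ • ∑ j ∈ Icc 1 k, ztil j) - z (i - 1)⟫) := by
  intro k hk
  set x : Z := (k : ℝ)⁻¹ • ∑ j ∈ Icc 1 k, ztil j
  have hbound := inv_mul_sum_le_of_two_mul_le_sub_add hk
    (f := fun i => ⟪M i (x - z i), x - z i⟫ + η i)
    (b := fun i => c (i - 1) * ⟪M (i - 1) (x - z (i - 1)), x - z (i - 1)⟫)
    (fun i hi => LinearMap.IsSymmetric.two_mul_inner_le_of_hpe_step (hsym i) hσ1.le (hpsd i _)
      (herr i (mem_Icc.mp hi).1) (hcomp i (mem_Icc.mp hi).1 _))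
    (add_nonneg (hpsd k _) (hη k))
  simpa only [add_comm (η 0)] using hbound

theorem stmt16 {Z : Type*} [NormedAddCommGroup Z] [InnerProductSpace ℝ Z]
    [FiniteDimensional ℝ Z] (T : Z → Set Z)
    (hmono : ∀ z z' v v', v ∈ T z → v' ∈ T z' → 0 ≤ ⟪v - v', z - z'⟫)
    (M : ℕ → (Z →ₗ[ℝ] Z))
    (hsym : ∀ k, ∀ u v : Z, ⟪M k u, v⟫ = ⟪u, M k v⟫)
    (hpsd : ∀ k, ∀ u : Z, 0 ≤ ⟪M k u, u⟫)
    (σ : ℝ) (hσ0 : 0 ≤ σ) (hσ1 : σ < 1)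
    (η : ℕ → ℝ) (hη : ∀ k, 0 ≤ η k)
    (c : ℕ → ℝ) (hc : ∀ k, 0 ≤ c k)
    (hcomp : ∀ i ≥ 1, ∀ u : Z, ⟪M i u, u⟫ ≤ (1 + c (i - 1)) * ⟪M (i - 1) u, u⟫)
    (z ztil : ℕ → Z)
    (hincl : ∀ k ≥ 1, M k (z (k - 1) - z k) ∈ T (ztil k))
    (herr : ∀ k : ℕ, 1 ≤ k →
      ⟪M k (z k - ztil k), z k - ztil k⟫ + η k ≤
        σ * ⟪M k (z (k - 1) - ztil k), z (k - 1) - ztil k⟫ + η (k - 1)) :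
    ∀ k : ℕ, 1 ≤ k →
      (k : ℝ)⁻¹ * ∑ i ∈ Icc 1 k,
          ⟪M i (z (i - 1) - z i), ztil i - (k : ℝ)⁻¹ • ∑ j ∈ Icc 1 k, ztil j⟫ ≤
        (1 / (2 * k)) * (η 0 +
          ⟪M 0 (((k : ℝ)⁻¹ • ∑ j ∈ Icc 1 k, ztil j) - z 0),
            ((k : ℝ)⁻¹ • ∑ j ∈ Icc 1 k, ztil j) - z 0⟫ +
          ∑ i ∈ Icc 1 k, c (i - 1) *
            ⟪M (i - 1) (((k : ℝ)⁻¹ • ∑ j ∈ Icc 1 k, ztil j) - z (i - 1)),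
              ((k : ℝ)⁻¹ • ∑ j ∈ Icc 1 k, ztil j) - z (i - 1)⟫) :=
  stmt16_general M hsym hpsd σ hσ1 η hη c hcomp z ztil herr
end

section
/- For every θ ∈ (0, (√5+1)/2) there exists σ_θ ∈ (0,1) such that for all σ ∈ [σ_θ, 1) the symmetric 2×2 matrix M_θ(σ) with entries M₁₁ = σ(1+θ) − 1, M₁₂ = M₂₁ = (σ+θ−1)(1−θ), M₂₂ = σ − (1−θ)² is positive definite, and moreover max{(1−θ)², 1−θ, 1/(1+θ)} < σ and (σ+θ−1)(4−2√2)/(√2·θ) < σ. -/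
/-!
At `σ = 1` every required inequality is strict: the leading minor is `θ`, the determinant is
`θ² (1 + θ - θ²)`, positive exactly because `θ` lies below the golden ratio, and the remaining
bounds reduce to `θ < 2` and `4 < 3√2`. All quantities are continuous in `σ`, so the inequalities
persist on some interval `[σ_θ, 1)`.
-/

open Filter Set Topology Matrix
open scoped goldenRatio

theorem Matrix.posDef_fin_two_of_pos_of_det_pos {K : Type*} [Field K] [LinearOrder K]
    [IsStrictOrderedRing K] [StarRing K] [TrivialStar K] {a b d : K}
    (ha : 0 < a) (hdet : 0 < a * d - b ^ 2) : (!![a, b; b, d] : Matrix (Fin 2) (Fin 2) K).PosDef := by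
  refine .of_dotProduct_mulVec_pos ?_ fun x hx => ?_
  · exact isHermitian_iff_isSymm.2 <| .ext fun i j => by fin_cases i <;> fin_cases j <;> rfl
  have hform : a * (star x ⬝ᵥ (!![a, b; b, d] *ᵥ x)) =
      (a * x 0 + b * x 1) ^ 2 + (a * d - b ^ 2) * x 1 ^ 2 := by
    simp only [star_trivial, dotProduct, mulVec, Fin.sum_univ_two, of_apply,
      cons_val', cons_val_zero, cons_val_one, empty_val', cons_val_fin_one]
    ring
  refine pos_of_mul_pos_right (hform ▸ ?_) ha.le
  rcases eq_or_ne (x 1) 0 with h1 | h1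
  · have h0 : x 0 ≠ 0 := fun h0 => hx (funext fun i => by fin_cases i <;> assumption)
    simpa [h1] using sq_pos_iff.2 (mul_ne_zero ha.ne' h0)
  · have := sq_pos_iff.2 h1
    positivity

theorem Real.sq_lt_add_one_of_goldenConj_lt_of_lt_goldenRatio {x : ℝ} (hψ : ψ < x) (hφ : x < φ) :
    x ^ 2 < x + 1 := by
  have h : x ^ 2 - x - 1 = (x - φ) * (x - ψ) := by
    linear_combination (x - φ) * goldenRatio_add_goldenConj - goldenRatio_mul_goldenConj
  nlinarith [mul_neg_of_neg_of_pos (sub_neg.2 hφ) (sub_pos.2 hψ)]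

theorem exists_Ico_subset_of_eventually_nhdsLT {α : Type*} [LinearOrder α] [TopologicalSpace α]
    [OrderTopology α] [DenselyOrdered α] [NoMinOrder α] {a b : α} {p : α → Prop} (hab : a < b)
    (hp : ∀ᶠ x in 𝓝[<] b, p x) : ∃ c ∈ Ioo a b, ∀ x ∈ Ico c b, p x := by
  obtain ⟨l, hlb, hl⟩ := mem_nhdsLT_iff_exists_Ico_subset.1 hp
  obtain ⟨m, ham, hmb⟩ := exists_between hab
  exact ⟨max l m, ⟨lt_max_of_lt_right ham, max_lt hlb hmb⟩,
    fun x hx => hl ⟨le_of_max_le_left hx.1, hx.2⟩⟩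

theorem stmt19 (θ : ℝ) (hθ0 : 0 < θ) (hθ1 : θ < (Real.sqrt 5 + 1) / 2) :
    ∃ σθ : ℝ, σθ ∈ Set.Ioo (0 : ℝ) 1 ∧
      ∀ σ ∈ Set.Ico σθ 1,
        (!![σ * (1 + θ) - 1, (σ + θ - 1) * (1 - θ);
            (σ + θ - 1) * (1 - θ), σ - (1 - θ) ^ 2] : Matrix (Fin 2) (Fin 2) ℝ).PosDef ∧
        max ((1 - θ) ^ 2) (max (1 - θ) (1 / (1 + θ))) < σ ∧
        (σ + θ - 1) * (4 - 2 * Real.sqrt 2) / (Real.sqrt 2 * θ) < σ := by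
  have hgold : θ ^ 2 < θ + 1 := Real.sq_lt_add_one_of_goldenConj_lt_of_lt_goldenRatio
    (Real.goldenConj_neg.trans hθ0) (by rwa [add_comm] at hθ1)
  have hθ2 : θ < 2 := by nlinarith
  have hdet_one : (1 * (1 + θ) - 1) * (1 - (1 - θ) ^ 2) - ((1 + θ - 1) * (1 - θ)) ^ 2
      = θ ^ 2 * (1 + θ - θ ^ 2) := by ring
  have hsqrt2 : 4 < 3 * Real.sqrt 2 := by
    nlinarith [Real.sq_sqrt (zero_le_two : (0 : ℝ) ≤ 2), Real.sqrt_nonneg 2]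
  have hev : ∀ᶠ σ in 𝓝 (1 : ℝ), 0 < σ * (1 + θ) - 1 ∧
      0 < (σ * (1 + θ) - 1) * (σ - (1 - θ) ^ 2) - ((σ + θ - 1) * (1 - θ)) ^ 2 ∧
      (1 - θ) ^ 2 < σ ∧ 1 - θ < σ ∧ 1 / (1 + θ) < σ ∧
      (σ + θ - 1) * (4 - 2 * Real.sqrt 2) < σ * (Real.sqrt 2 * θ) := by
    refine (ContinuousAt.eventually_lt (by fun_prop) (by fun_prop) ?_).and <|
      (ContinuousAt.eventually_lt (by fun_prop) (by fun_prop) ?_).and <|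
      (ContinuousAt.eventually_lt (by fun_prop) (by fun_prop) ?_).and <|
      (ContinuousAt.eventually_lt (by fun_prop) (by fun_prop) ?_).and <|
      (ContinuousAt.eventually_lt (by fun_prop) (by fun_prop) ?_).and <|
      ContinuousAt.eventually_lt (by fun_prop) (by fun_prop) ?_
    · linarith
    · rw [hdet_one]; exact mul_pos (pow_pos hθ0 2) (by linarith)
    · nlinarith
    · linarith
    · rw [div_lt_one (by linarith)]; linarith
    · nlinarith
  obtain ⟨σθ, hσθ, hσ⟩ := exists_Ico_subset_of_eventually_nhdsLT one_pos (nhdsWithin_le_nhds hev)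
  refine ⟨σθ, hσθ, fun σ hσσ => ?_⟩
  obtain ⟨h11, hdet, hsq, hlin, hinv, hsqrt⟩ := hσ σ hσσ
  refine ⟨posDef_fin_two_of_pos_of_det_pos h11 hdet, max_lt hsq (max_lt hlin hinv), ?_⟩
  rwa [div_lt_iff₀ (by positivity)]
end
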